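/- Suppose a stalled motor admittance scales as f·(G_stall − jB_stall) with connected fraction f ∈ [0,1], and the load voltage is V_L(f) = V_s / |1 + Z_f·(Y₀ + f(G_stall − jB_stall))| for a fixed source voltage V_s > 0, feeder impedance Z_f = R_f + jX_f with R_f, X_f > 0, and background admittance Y₀ = G₀ − jB₀ with G₀, B₀ ≥ 0. Then V_L is strictly decreasing in f. -/

import Mathlib

open Complex ComplexConjugate

/-!
Write the denominator as `‖w + f z‖` with `w = 1 + Z_f Y₀` and `z = Z_f (G_stall − jB_stall)`.
Its square `‖w‖² + 2 f Re (w z̄) + f² ‖z‖²` is strictly increasing for `f ≥ 0` as soon as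
`z ≠ 0` and `Re (w z̄) ≥ 0`, and here
`Re (w z̄) = R_f G_stall + X_f B_stall + |Z_f|² (G₀ G_stall + B₀ B_stall) > 0`.
-/

namespace Complex

theorem normSq_add_ofReal_mul (w z : ℂ) (t : ℝ) :
    normSq (w + t * z) = normSq w + 2 * t * (w * conj z).re + t ^ 2 * normSq z := by
  rw [normSq_add, normSq_mul, normSq_ofReal, map_mul, conj_ofReal, mul_left_comm,
    re_ofReal_mul]
  ring

theorem strictMonoOn_norm_add_ofReal_mul {w z : ℂ} (hz : z ≠ 0) (hwz : 0 ≤ (w * conj z).re) :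
    StrictMonoOn (fun t : ℝ => ‖w + t * z‖) (Set.Ici 0) := by
  intro a (ha : 0 ≤ a) b _ hab
  have hz : 0 < normSq z := normSq_pos.2 hz
  suffices normSq (w + a * z) < normSq (w + b * z) by
    simpa only [← Complex.sq_norm, sq_lt_sq₀ (norm_nonneg _) (norm_nonneg _)] using this
  rw [normSq_add_ofReal_mul, normSq_add_ofReal_mul]
  nlinarith [mul_nonneg (sub_nonneg.2 hab.le) hwz, mul_pos (mul_pos (sub_pos.2 hab)
    (by linarith : 0 < a + b)) hz]

end Complex

theorem StrictMonoOn.const_div_of_pos {s : Set ℝ} {g : ℝ → ℝ} (hg : StrictMonoOn g s)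
    (hpos : ∀ x ∈ s, 0 < g x) {c : ℝ} (hc : 0 < c) : StrictAntiOn (fun x => c / g x) s :=
  fun _ ha _ hb hab => div_lt_div_of_pos_left hc (hpos _ ha) (hg ha hb hab)

/-- With V_L(f) = V_s / |1 + Z_f (Y₀ + f (G_stall − jB_stall))|, V_s > 0,
Z_f = R_f + jX_f with R_f, X_f > 0, background admittance Y₀ = G₀ − jB₀ with
G₀, B₀ ≥ 0 and G_stall, B_stall > 0, the load voltage V_L is strictly decreasing
in the connected fraction f on [0,1]. -/
theorem load_voltage_decreasing_in_fraction (Vs Rf Xf G0 B0 Gst Bst : ℝ)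
    (hVs : 0 < Vs) (hRf : 0 < Rf) (hXf : 0 < Xf) (hG0 : 0 ≤ G0) (hB0 : 0 ≤ B0)
    (hGst : 0 < Gst) (hBst : 0 < Bst) :
    let VL : ℝ → ℝ := fun f =>
      Vs / ‖1 + (Rf + Xf * I) *
        ((G0 - B0 * I) + (f : ℂ) * (Gst - Bst * I))‖
    StrictAntiOn VL (Set.Icc (0 : ℝ) 1) := by
  intro VL
  set w : ℂ := 1 + (Rf + Xf * I) * (G0 - B0 * I)
  set z : ℂ := (Rf + Xf * I) * (Gst - Bst * I)
  have hVL : VL = fun f : ℝ => Vs / ‖w + f * z‖ := by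
    funext f
    simp only [VL, w, z]
    ring_nf
  have hz : z ≠ 0 := fun h => by
    have : Rf * Gst + Xf * Bst = 0 := by simpa [z] using congrArg re h
    nlinarith [mul_pos hRf hGst, mul_pos hXf hBst]
  have hwz : (w * conj z).re = Rf * Gst + Xf * Bst + (Rf ^ 2 + Xf ^ 2) * (G0 * Gst + B0 * Bst) := by
    simp [w, z]
    ring
  have hw : 0 < ‖w‖ := by
    have : w.re = 1 + (Rf * G0 + Xf * B0) := by simp [w]
    exact (by rw [this]; positivity : 0 < w.re).trans_le (re_le_norm w)
  have hmono := strictMonoOn_norm_add_ofReal_mul hz (by rw [hwz]; positivity)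
  rw [hVL]
  refine (hmono.mono Set.Icc_subset_Ici_self).const_div_of_pos (fun f hf => ?_) hVs
  exact hw.trans_le (by simpa using hmono.monotoneOn Set.self_mem_Ici hf.1 hf.1)
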